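/- Let M ≥ 3 and let 𝒞^{∨-} = {w ∈ ℝ^M : ∑_{i=1}^M w_i = 1, w ≥ 0, 2w_i ≤ w_{i-1} + w_{i+1} for 2 ≤ i ≤ M-1, w_1 ≥ w_2 ≥ … ≥ w_M} be the set of convex and nonincreasing probability vectors. Then the set of extreme points of 𝒞^{∨-} is exactly {v_1, …, v_M}, where for 1 ≤ i ≤ M-1 the vector v_i has coordinates v_i(m) = (2/(i(i+1)))·(i+1-m) for 1 ≤ m ≤ i and v_i(m) = 0 for i < m ≤ M (i.e., v_i = (2/(i(i+1)))·(i, i-1, …, 2, 1, 0, …, 0)ᵀ), and v_M = (1/M)·(1,…,1)ᵀ. -/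

import Mathlib

open Finset
namespace Stmt14
variable {M : ℕ}

noncomputable def EE (hM : 3 ≤ M) (w : Fin M → ℝ) (n : ℕ) : ℝ := w ⟨min n (M-1), by omega⟩

noncomputable def lam (hM : 3 ≤ M) (w : Fin M → ℝ) (t : ℕ) : ℝ :=
  if t = M - 1 then (M : ℝ) * EE hM w (M-1)
  else ((t:ℝ)+1) * ((t:ℝ)+2) / 2 * (EE hM w t - 2 * EE hM w (t+1) + EE hM w (t+2))

noncomputable def vv (M : ℕ) (t i : ℕ) : ℝ :=
  if t = M - 1 then 1 / (M : ℝ)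
  else if i ≤ t then ((t + 1 - i : ℕ) : ℝ) * (2 / (((t : ℝ) + 1) * ((t : ℝ) + 2)))
  else 0

lemma EE_eq (hM : 3 ≤ M) (w : Fin M → ℝ) (n : ℕ) (hn : n ≤ M-1) :
    EE hM w n = w ⟨n, by omega⟩ := by simp [EE, Nat.min_eq_left hn]

lemma EE_clamp (hM : 3 ≤ M) (w : Fin M → ℝ) (n : ℕ) (hn : M-1 ≤ n) :
    EE hM w n = w ⟨M-1, by omega⟩ := by simp [EE, Nat.min_eq_right hn]

lemma abel14 (G : ℕ → ℝ) (i : ℕ) : ∀ N, ∑ t ∈ Finset.range N,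
    (if i ≤ t then ((t + 1 - i : ℕ):ℝ) * (G t - 2*G (t+1) + G (t+2)) else 0) =
    if i < N then G i - G N - ((N - i : ℕ):ℝ) * (G N - G (N+1)) else 0 := by
  intro N
  induction N with
  | zero => simp
  | succ N ih =>
    rw [Finset.sum_range_succ, ih]
    rcases lt_trichotomy i N with h | h | h
    · rw [if_pos h, if_pos (by omega), if_pos (by omega)]
      have c1 : ((N + 1 - i : ℕ):ℝ) = ((N - i : ℕ):ℝ) + 1 := by
        have : N + 1 - i = (N - i) + 1 := by omega
        rw [this]; push_cast; ring
      rw [c1]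
      have c3 : ((N - i : ℕ):ℝ) = (N:ℝ) - (i:ℝ) := by rw [Nat.cast_sub (by omega)]
      rw [c3]
      ring
    · rw [if_neg (by omega), if_pos (by omega), if_pos (by omega)]
      have e1 : N + 1 - i = 1 := by omega
      rw [e1, h]
      push_cast
      ring
    · rw [if_neg (by omega), if_neg (by omega), if_neg (by omega)]
      simp

lemma recon (hM : 3 ≤ M) (w : Fin M → ℝ) (i : Fin M) :
    ∑ t : Fin M, lam hM w (t:ℕ) * vv M (t:ℕ) (i:ℕ) = w i := by
  rw [Fin.sum_univ_eq_sum_range (fun t => lam hM w t * vv M t (i:ℕ))]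
  have hrg : Finset.range M = Finset.range ((M-1)+1) := by congr 1; omega
  rw [hrg, Finset.sum_range_succ]
  have hlast : lam hM w (M-1) * vv M (M-1) (i:ℕ) = w ⟨M-1, by omega⟩ := by
    rw [lam, if_pos rfl, vv, if_pos rfl, EE_clamp hM w _ le_rfl]
    have : (M:ℝ) ≠ 0 := by positivity
    field_simp
  have hmain : ∀ t ∈ Finset.range (M-1), lam hM w t * vv M t (i:ℕ)
      = (if (i:ℕ) ≤ t then ((t + 1 - (i:ℕ) : ℕ):ℝ) * (EE hM w t - 2*EE hM w (t+1) + EE hM w (t+2)) else 0) := by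
    intro t ht
    simp only [Finset.mem_range] at ht
    rw [lam, if_neg (by omega), vv, if_neg (by omega)]
    by_cases hi : (i:ℕ) ≤ t
    · rw [if_pos hi, if_pos hi]
      have h1 : (t:ℝ) + 1 ≠ 0 := by positivity
      have h2 : (t:ℝ) + 2 ≠ 0 := by positivity
      field_simp
    · rw [if_neg hi, if_neg hi, mul_zero]
  rw [Finset.sum_congr rfl hmain, abel14 (EE hM w) (i:ℕ) (M-1), hlast]
  by_cases hi : (i:ℕ) < M - 1
  · rw [if_pos hi]
    rw [EE_eq hM w (i:ℕ) (by omega), EE_clamp hM w (M-1) le_rfl, EE_clamp hM w (M-1+1) (by omega)]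
    rw [Fin.eta]
    ring
  · rw [if_neg hi]
    have hie : i = ⟨M-1, by omega⟩ := Fin.ext (by simp; omega)
    rw [hie]
    ring

lemma EE_vv (hM : 3 ≤ M) (s : ℕ) (hs : s < M - 1) (n : ℕ) :
    EE hM (fun i : Fin M => vv M s (i:ℕ)) n
      = if n ≤ s then ((s + 1 - n : ℕ):ℝ) * (2 / (((s:ℝ)+1)*((s:ℝ)+2))) else 0 := by
  have hval : EE hM (fun i : Fin M => vv M s (i:ℕ)) n = vv M s (min n (M-1)) := by
    simp [EE]
  rw [hval, vv, if_neg (by omega)]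
  by_cases h : n ≤ s
  · have hmn : min n (M-1) = n := by omega
    rw [hmn]
  · rw [if_neg (by omega), if_neg h]

lemma lam_vv (hM : 3 ≤ M) (s t : ℕ) (hs : s < M) (ht : t < M) :
    lam hM (fun i : Fin M => vv M s (i:ℕ)) t = if t = s then 1 else 0 := by
  by_cases hsl : s = M - 1
  · subst hsl
    have hE : ∀ n, EE hM (fun i : Fin M => vv M (M-1) (i:ℕ)) n = 1/(M:ℝ) := by
      intro n; simp [EE, vv]
    rw [lam]
    by_cases h : t = M - 1
    · rw [if_pos h, hE, if_pos h]
      have : (M:ℝ) ≠ 0 := by positivity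
      field_simp
    · rw [if_neg h, hE, hE, hE, if_neg h]
      ring
  · have hsM : s < M - 1 := by omega
    have hE := EE_vv hM s hsM
    rw [lam]
    by_cases h : t = M - 1
    · rw [if_pos h, hE, if_neg (by omega), if_neg (by omega)]
      ring
    · rw [if_neg h, hE, hE, hE]
      by_cases h1 : t = s
      · subst h1
        rw [if_pos le_rfl, if_neg (by omega), if_neg (by omega), if_pos rfl]
        have e : t + 1 - t = 1 := by omega
        rw [e]
        have p1 : (t:ℝ) + 1 ≠ 0 := by positivity
        have p2 : (t:ℝ) + 2 ≠ 0 := by positivity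
        push_cast
        field_simp
        ring
      · rw [if_neg h1]
        by_cases h2 : t + 2 ≤ s
        · rw [if_pos (by omega), if_pos (by omega), if_pos h2]
          have c1 : ((s + 1 - t : ℕ):ℝ) = (s:ℝ)+1-(t:ℝ) := by
            rw [Nat.cast_sub (by omega)]; push_cast; ring
          have c2 : ((s + 1 - (t+1) : ℕ):ℝ) = (s:ℝ)-(t:ℝ) := by
            rw [Nat.cast_sub (by omega)]; push_cast; ring
          have c3 : ((s + 1 - (t+2) : ℕ):ℝ) = (s:ℝ)-1-(t:ℝ) := by
            rw [Nat.cast_sub (by omega)]; push_cast; ring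
          rw [c1, c2, c3]
          ring
        · by_cases h3 : t + 1 ≤ s
          · rw [if_pos (by omega), if_pos h3, if_neg (by omega)]
            have e1 : s + 1 - t = 2 := by omega
            have e2 : s + 1 - (t+1) = 1 := by omega
            rw [e1, e2]
            push_cast
            ring
          · rw [if_neg (by omega), if_neg (by omega), if_neg (by omega)]
            ring

lemma gauss : ∀ n : ℕ, ∑ i ∈ Finset.range n, ((n - i : ℕ) : ℝ) = n*(n+1)/2 := by
  intro n
  induction n with
  | zero => simp
  | succ n ih =>
    rw [Finset.sum_range_succ]
    have : ∀ i ∈ Finset.range n, ((n + 1 - i : ℕ) : ℝ) = ((n - i : ℕ) : ℝ) + 1 := by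
      intro i hi
      simp only [Finset.mem_range] at hi
      have : n + 1 - i = (n - i) + 1 := by omega
      rw [this]; push_cast; ring
    rw [Finset.sum_congr rfl this, Finset.sum_add_distrib, ih]
    simp
    ring

lemma vv_rowsum (hM : 3 ≤ M) (t : ℕ) (ht : t < M) : ∑ i : Fin M, vv M t (i:ℕ) = 1 := by
  rw [Fin.sum_univ_eq_sum_range (fun i => vv M t i)]
  by_cases h : t = M - 1
  · simp only [vv, h, if_true]
    rw [Finset.sum_const, Finset.card_range]
    have : (M:ℝ) ≠ 0 := by positivity
    rw [nsmul_eq_mul]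
    field_simp
  · simp only [vv, h, if_false]
    rw [Finset.sum_ite, Finset.sum_const_zero, add_zero]
    have hfilter : Finset.filter (fun i => i ≤ t) (Finset.range M) = Finset.range (t+1) := by
      ext i; simp [Finset.mem_filter, Finset.mem_range]; omega
    rw [hfilter, ← Finset.sum_mul]
    have hg : ∑ i ∈ Finset.range (t+1), ((t + 1 - i : ℕ) : ℝ) = (t+1)*(t+2)/2 := by
      have := gauss (t+1)
      push_cast at this ⊢
      linarith
    rw [hg]
    have h1 : (t:ℝ) + 1 ≠ 0 := by positivity
    have h2 : (t:ℝ) + 2 ≠ 0 := by positivity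
    field_simp

lemma vv_nonneg (M t i : ℕ) : 0 ≤ vv M t i := by
  unfold vv; split_ifs <;> positivity

lemma lam_lin (hM : 3 ≤ M) (a b : ℝ) (x y : Fin M → ℝ) (t : ℕ) :
    lam hM (a • x + b • y) t = a * lam hM x t + b * lam hM y t := by
  have hE : ∀ n, EE hM (a • x + b • y) n = a * EE hM x n + b * EE hM y n := by
    intro n; simp [EE]
  rw [lam, lam, lam]
  split_ifs with h
  · rw [hE]; ring
  · rw [hE, hE, hE]; ring

lemma lam_sum (hM : 3 ≤ M) (w : Fin M → ℝ) (hsum : ∑ i, w i = 1) :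
    ∑ t : Fin M, lam hM w (t:ℕ) = 1 := by
  have h1 : ∀ t : Fin M, lam hM w (t:ℕ) = ∑ i : Fin M, lam hM w (t:ℕ) * vv M (t:ℕ) (i:ℕ) := by
    intro t
    rw [← Finset.mul_sum, vv_rowsum hM _ t.isLt, mul_one]
  calc ∑ t : Fin M, lam hM w (t:ℕ)
      = ∑ t : Fin M, ∑ i : Fin M, lam hM w (t:ℕ) * vv M (t:ℕ) (i:ℕ) :=
        Finset.sum_congr rfl (fun t _ => h1 t)
    _ = ∑ i : Fin M, ∑ t : Fin M, lam hM w (t:ℕ) * vv M (t:ℕ) (i:ℕ) := Finset.sum_comm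
    _ = ∑ i : Fin M, w i := Finset.sum_congr rfl (fun i _ => recon hM w i)
    _ = 1 := hsum

lemma lam_nonneg (hM : 3 ≤ M) (w : Fin M → ℝ)
    (hpos : ∀ i, 0 ≤ w i)
    (hconv : ∀ i : Fin M, ∀ (h1 : 0 < (i : ℕ)) (h2 : (i : ℕ) < M - 1),
        2 * w i ≤ w ⟨(i : ℕ) - 1, by have := hM; omega⟩ + w ⟨(i : ℕ) + 1, by have := hM; omega⟩)
    (hmono : ∀ i j : Fin M, i ≤ j → w j ≤ w i)
    (t : ℕ) (ht : t < M) : 0 ≤ lam hM w t := by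
  rw [lam]
  by_cases h : t = M - 1
  · rw [if_pos h, EE_clamp hM w _ le_rfl]
    exact mul_nonneg (by positivity) (hpos _)
  · rw [if_neg h]
    apply mul_nonneg (by positivity)
    by_cases h2 : t + 2 ≤ M - 1
    · rw [EE_eq hM w t (by omega), EE_eq hM w (t+1) (by omega), EE_eq hM w (t+2) (by omega)]
      have hc := hconv ⟨t+1, by omega⟩ (show 0 < t+1 by omega) (show t+1 < M-1 by omega)
      have hc' : 2 * w ⟨t+1, by omega⟩ ≤ w ⟨t, by omega⟩ + w ⟨t+2, by omega⟩ := hc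
      linarith
    · have ht' : t = M - 2 := by omega
      rw [EE_eq hM w t (by omega), EE_clamp hM w (t+1) (by omega), EE_clamp hM w (t+2) (by omega)]
      have := hmono ⟨t, by omega⟩ ⟨M-1, by omega⟩ (by simp [Fin.mk_le_mk]; omega)
      linarith

lemma vv_conv (hM : 3 ≤ M) (s : ℕ) (hsM : s < M) (k : ℕ) (h1 : 0 < k) (h2 : k < M - 1) :
    2 * vv M s k ≤ vv M s (k - 1) + vv M s (k + 1) := by
  by_cases hs : s = M - 1
  · simp only [vv, if_pos hs]
    linarith
  · simp only [vv, if_neg hs]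
    have hc : (0:ℝ) ≤ 2 / (((s:ℝ)+1)*((s:ℝ)+2)) := by positivity
    by_cases ha : k + 1 ≤ s
    · rw [if_pos (by omega), if_pos (by omega), if_pos ha]
      have c1 : ((s + 1 - k : ℕ):ℝ) = (s:ℝ)+1-(k:ℝ) := by
        rw [Nat.cast_sub (by omega)]; push_cast; ring
      have c2 : ((s + 1 - (k-1) : ℕ):ℝ) = (s:ℝ)+2-(k:ℝ) := by
        have : s + 1 - (k-1) = s + 2 - k := by omega
        rw [this, Nat.cast_sub (by omega)]; push_cast; ring
      have c3 : ((s + 1 - (k+1) : ℕ):ℝ) = (s:ℝ)-(k:ℝ) := by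
        rw [Nat.cast_sub (by omega)]; push_cast; ring
      rw [c1, c2, c3]
      linarith
    · by_cases hb : k ≤ s
      · rw [if_pos hb, if_pos (by omega), if_neg ha]
        have e1 : s + 1 - k = 1 := by omega
        have e2 : s + 1 - (k-1) = 2 := by omega
        rw [e1, e2]
        push_cast
        linarith
      · by_cases hc' : k - 1 ≤ s
        · rw [if_neg hb, if_pos hc', if_neg (by omega)]
          have : (0:ℝ) ≤ ((s + 1 - (k-1) : ℕ):ℝ) := by positivity
          nlinarith
        · rw [if_neg hb, if_neg hc', if_neg (by omega)]
          linarith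

lemma vv_mono (hM : 3 ≤ M) (s : ℕ) (hs : s < M) (i j : ℕ) (hij : i ≤ j) :
    vv M s j ≤ vv M s i := by
  by_cases hsl : s = M - 1
  · simp only [vv, if_pos hsl]
    exact le_refl _
  · simp only [vv, if_neg hsl]
    have hc : (0:ℝ) ≤ 2 / (((s:ℝ)+1)*((s:ℝ)+2)) := by positivity
    by_cases hj : j ≤ s
    · rw [if_pos hj, if_pos (by omega)]
      apply mul_le_mul_of_nonneg_right _ hc
      exact_mod_cast Nat.sub_le_sub_left hij (s+1)
    · rw [if_neg hj]
      by_cases hi : i ≤ s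
      · rw [if_pos hi]; positivity
      · rw [if_neg hi]

end Stmt14

open Stmt14 in
/-- The extreme points of the set of convex and nonincreasing probability vectors in `ℝ^M`
(`M ≥ 3`) are exactly the `M` vectors: for `1 ≤ i ≤ M-1` (1-based) the vector
`(2/(i(i+1)))·(i,i-1,…,2,1,0,…,0)`, and `v_M = (1/M)1`
(0-based vertex index `t` encodes `i = t+1`). -/
theorem stmt14 (M : ℕ) (hM : 3 ≤ M)
    (S : Set (Fin M → ℝ))
    (hS : S = {w : Fin M → ℝ | ∑ i, w i = 1 ∧ (∀ i, 0 ≤ w i) ∧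
        (∀ i : Fin M, ∀ (h1 : 0 < (i : ℕ)) (h2 : (i : ℕ) < M - 1),
          2 * w i ≤ w ⟨(i : ℕ) - 1, by omega⟩ + w ⟨(i : ℕ) + 1, by omega⟩) ∧
        ∀ i j : Fin M, i ≤ j → w j ≤ w i})
    (v : Fin M → (Fin M → ℝ))
    (hv : v = fun (t i : Fin M) =>
      if (t : ℕ) = M - 1 then 1 / (M : ℝ)
      else if (i : ℕ) ≤ (t : ℕ) then
        (((t : ℕ) + 1 - (i : ℕ) : ℕ) : ℝ)
            * (2 / ((((t : ℕ) : ℝ) + 1) * (((t : ℕ) : ℝ) + 2)))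
      else 0) :
    S.extremePoints ℝ = Set.range v := by
  subst hS
  have hveq : ∀ (t i : Fin M), v t i = vv M (t:ℕ) (i:ℕ) := by
    subst hv; intro t i; rfl
  have hvfun : ∀ t : Fin M, v t = fun i : Fin M => vv M (t:ℕ) (i:ℕ) :=
    fun t => funext (hveq t)
  clear hv
  set S : Set (Fin M → ℝ) := {w : Fin M → ℝ | ∑ i, w i = 1 ∧ (∀ i, 0 ≤ w i) ∧
        (∀ i : Fin M, ∀ (h1 : 0 < (i : ℕ)) (h2 : (i : ℕ) < M - 1),
          2 * w i ≤ w ⟨(i : ℕ) - 1, by omega⟩ + w ⟨(i : ℕ) + 1, by omega⟩) ∧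
        ∀ i j : Fin M, i ≤ j → w j ≤ w i} with hSdef
  have hvS : ∀ t : Fin M, v t ∈ S := by
    intro t
    rw [hvfun t]
    refine ⟨vv_rowsum hM (t:ℕ) t.isLt, fun i => vv_nonneg M _ _, ?_, ?_⟩
    · intro i h1 h2
      exact vv_conv hM (t:ℕ) t.isLt (i:ℕ) h1 h2
    · intro i j hij
      exact vv_mono hM (t:ℕ) t.isLt (i:ℕ) (j:ℕ) hij
  have hconvS : Convex ℝ S := by
    intro x hx y hy a b ha hb hab
    obtain ⟨hx1, hx2, hx3, hx4⟩ := hx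
    obtain ⟨hy1, hy2, hy3, hy4⟩ := hy
    refine ⟨?_, ?_, ?_, ?_⟩
    · simp only [Pi.add_apply, Pi.smul_apply, smul_eq_mul]
      rw [Finset.sum_add_distrib, ← Finset.mul_sum, ← Finset.mul_sum, hx1, hy1]
      linarith
    · intro i
      simp only [Pi.add_apply, Pi.smul_apply, smul_eq_mul]
      exact add_nonneg (mul_nonneg ha (hx2 i)) (mul_nonneg hb (hy2 i))
    · intro i h1 h2
      simp only [Pi.add_apply, Pi.smul_apply, smul_eq_mul]
      have h3 := hx3 i h1 h2
      have h4 := hy3 i h1 h2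
      nlinarith [mul_le_mul_of_nonneg_left h3 ha, mul_le_mul_of_nonneg_left h4 hb]
    · intro i j hij
      simp only [Pi.add_apply, Pi.smul_apply, smul_eq_mul]
      have h3 := hx4 i j hij
      have h4 := hy4 i j hij
      nlinarith [mul_le_mul_of_nonneg_left h3 ha, mul_le_mul_of_nonneg_left h4 hb]
  have hsub : S ⊆ convexHull ℝ (Set.range v) := by
    intro w hw
    obtain ⟨hw1, hw2, hw3, hw4⟩ := hw
    have hws : w = Finset.univ.centerMass (fun t : Fin M => lam hM w (t:ℕ)) v := by
      rw [Finset.centerMass_eq_of_sum_1 _ _ (lam_sum hM w hw1)]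
      funext i
      rw [Finset.sum_apply]
      simp only [Pi.smul_apply, smul_eq_mul]
      rw [← recon hM w i]
      exact Finset.sum_congr rfl (fun t _ => by rw [hveq])
    rw [hws]
    apply Finset.centerMass_mem_convexHull
    · intro t _
      exact lam_nonneg hM w hw2 hw3 hw4 (t:ℕ) t.isLt
    · exact lt_of_lt_of_eq one_pos (lam_sum hM w hw1).symm
    · intro t _
      exact Set.mem_range_self t
  have hSeq : S = convexHull ℝ (Set.range v) :=
    Set.Subset.antisymm hsub (convexHull_min (Set.range_subset_iff.2 hvS) hconvS)
  apply Set.Subset.antisymm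
  · rw [hSeq]
    exact extremePoints_convexHull_subset
  · rintro _ ⟨s, rfl⟩
    rw [mem_extremePoints]
    refine ⟨hvS s, ?_⟩
    intro x hx y hy hseg
    obtain ⟨a, b, ha, hb, hab, hxy⟩ := hseg
    have hlvs : ∀ t : Fin M, lam hM (v s) (t:ℕ) = if (t:ℕ) = (s:ℕ) then 1 else 0 := by
      intro t
      rw [hvfun s]
      exact lam_vv hM (s:ℕ) (t:ℕ) s.isLt t.isLt
    have hzero : ∀ t : Fin M, t ≠ s → lam hM x (t:ℕ) = 0 ∧ lam hM y (t:ℕ) = 0 := by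
      intro t hts
      have h0 : lam hM (v s) (t:ℕ) = 0 := by
        rw [hlvs t, if_neg (fun h => hts (Fin.ext h))]
      rw [← hxy, lam_lin] at h0
      have hx0 := lam_nonneg hM x hx.2.1 hx.2.2.1 hx.2.2.2 (t:ℕ) t.isLt
      have hy0 := lam_nonneg hM y hy.2.1 hy.2.2.1 hy.2.2.2 (t:ℕ) t.isLt
      constructor <;> nlinarith
    have key : ∀ z, z ∈ S → (∀ t : Fin M, t ≠ s → lam hM z (t:ℕ) = 0) → z = v s := by
      intro z hz hz0
      have hs1 : lam hM z (s:ℕ) = 1 := by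
        rw [← lam_sum hM z hz.1]
        symm
        apply Finset.sum_eq_single s
        · intro t _ ht
          exact hz0 t ht
        · intro h
          exact absurd (Finset.mem_univ s) h
      funext i
      have hrec := recon hM z i
      have hone : lam hM z (s:ℕ) * vv M (s:ℕ) (i:ℕ) = z i := by
        rw [← hrec]
        symm
        apply Finset.sum_eq_single s
        · intro t _ ht
          rw [hz0 t ht, zero_mul]
        · intro h
          exact absurd (Finset.mem_univ s) h
      rw [hs1, one_mul] at hone
      rw [hveq s i]
      exact hone.symm
    exact ⟨key x hx (fun t ht => (hzero t ht).1), key y hy (fun t ht => (hzero t ht).2)⟩
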